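/- Define the vector fields X_i = ∂/∂y^i - t_i Γ on ℝⁿ \ {0}, where Γ = y^j ∂/∂y^j and t_i = (1/F) ∂F/∂y^i. Then the Lie bracket satisfies [X_i, X_j] = t_i X_j - t_j X_i for all i, j. -/

import Mathlib

open scoped BigOperators

noncomputable def pd {n : ℕ} (f : (Fin n → ℝ) → ℝ) (i : Fin n) (y : Fin n → ℝ) : ℝ :=
  fderiv ℝ f y (Pi.single i 1)

/-- Lie bracket of vector fields on (an open subset of) `Fin n → ℝ`. -/
noncomputable def lie {n : ℕ} (X Y : (Fin n → ℝ) → (Fin n → ℝ)) (y : Fin n → ℝ) :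
    Fin n → ℝ :=
  fderiv ℝ Y y (X y) - fderiv ℝ X y (Y y)

/-- With `X_i = ∂/∂yⁱ - t_i Γ`, `[X_i, X_j] = t_i X_j - t_j X_i`. -/
theorem stmt7 {n : ℕ} (F : (Fin n → ℝ) → ℝ)
    (hsmooth : ContDiffOn ℝ (⊤ : ℕ∞) F {y | y ≠ 0})
    (hhom : ∀ (y : Fin n → ℝ), y ≠ 0 → ∀ l : ℝ, 0 < l → F (l • y) = l * F y)
    (hF : ∀ (y : Fin n → ℝ), y ≠ 0 → F y ≠ 0)
    (t : (Fin n → ℝ) → Fin n → ℝ)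
    (ht : ∀ y k, t y k = (1 / F y) * pd F k y)
    (X : Fin n → (Fin n → ℝ) → (Fin n → ℝ))
    (hX : ∀ i y, X i y = Pi.single i 1 - t y i • y)
    (i j : Fin n) (y : Fin n → ℝ) (hy : y ≠ 0) :
    lie (X i) (X j) y = t y i • X j y - t y j • X i y := by
  classical
  have hU : IsOpen {z : Fin n → ℝ | z ≠ 0} := isOpen_ne
  have hnhds : {z : Fin n → ℝ | z ≠ 0} ∈ nhds y := hU.mem_nhds hy
  set f' : (Fin n → ℝ) → ((Fin n → ℝ) →L[ℝ] ℝ) := fderiv ℝ F with hf'def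
  have hFd : ∀ z : Fin n → ℝ, z ≠ 0 → DifferentiableAt ℝ F z := fun z hz =>
    (hsmooth.contDiffAt (hU.mem_nhds hz)).differentiableAt (by simp)
  have hf'd : DifferentiableAt ℝ f' y :=
    ((hsmooth.contDiffAt hnhds).fderiv_right (m := 1) (by exact WithTop.coe_le_coe.mpr le_top)).differentiableAt one_ne_zero
  have hc : ∀ v : Fin n → ℝ, HasDerivAt (fun l : ℝ => l • v) v 1 := by
    intro v
    simpa using (hasDerivAt_id (1 : ℝ)).smul_const v
  -- Euler identity: f' y y = F y
  have euler1 : f' y y = F y := by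
    have h1 : HasDerivAt (fun l : ℝ => F (l • y)) (f' y y) 1 := by
      have hF1 : HasFDerivAt F (f' y) ((1 : ℝ) • y) := by
        simpa using (hFd y hy).hasFDerivAt
      exact hF1.comp_hasDerivAt 1 (hc y)
    have heq : (fun l : ℝ => F (l • y)) =ᶠ[nhds (1 : ℝ)] fun l => l * F y := by
      filter_upwards [eventually_gt_nhds zero_lt_one] with l hl
      exact hhom y hy l hl
    have hbase : HasDerivAt (fun l : ℝ => l * F y) (F y) 1 := by
      simpa using (hasDerivAt_id (1 : ℝ)).mul_const (F y)
    exact h1.unique (hbase.congr_of_eventuallyEq heq)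
  -- homogeneity of the derivative
  have hf'hom : ∀ l : ℝ, 0 < l → f' (l • y) = f' y := by
    intro l hl
    have hly : l • y ≠ 0 := smul_ne_zero (ne_of_gt hl) hy
    have hsm : HasFDerivAt (fun x : Fin n → ℝ => l • x)
        (l • ContinuousLinearMap.id ℝ (Fin n → ℝ)) y := (hasFDerivAt_id y).const_smul l
    have hg1 : HasFDerivAt (fun x : Fin n → ℝ => F (l • x))
        ((f' (l • y)).comp (l • ContinuousLinearMap.id ℝ (Fin n → ℝ))) y :=
      (hFd _ hly).hasFDerivAt.comp y hsm
    have hg2 : HasFDerivAt (fun x : Fin n → ℝ => l * F x) (l • f' y) y := by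
      exact (hFd y hy).hasFDerivAt.const_smul l
    have heq : (fun x : Fin n → ℝ => F (l • x)) =ᶠ[nhds y] fun x => l * F x := by
      filter_upwards [hnhds] with z hz
      exact hhom z hz l hl
    have hEq : l • f' y = (f' (l • y)).comp (l • ContinuousLinearMap.id ℝ (Fin n → ℝ)) :=
      ((hg2.congr_of_eventuallyEq heq).unique hg1)
    ext v
    have hv := congrArg (fun L : (Fin n → ℝ) →L[ℝ] ℝ => L v) hEq
    simp only [ContinuousLinearMap.smul_apply, ContinuousLinearMap.coe_comp',
      Function.comp_apply, ContinuousLinearMap.coe_id', id_eq, map_smul,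
      smul_eq_mul] at hv
    exact (mul_left_cancel₀ (ne_of_gt hl) hv).symm
  -- Euler for the derivative: f'' y = 0
  have euler2 : fderiv ℝ f' y y = 0 := by
    have h1 : HasDerivAt (fun l : ℝ => f' (l • y)) (fderiv ℝ f' y y) 1 := by
      have hf1 : HasFDerivAt f' (fderiv ℝ f' y) ((1 : ℝ) • y) := by
        simpa using hf'd.hasFDerivAt
      exact hf1.comp_hasDerivAt 1 (hc y)
    have heq : (fun l : ℝ => f' (l • y)) =ᶠ[nhds (1 : ℝ)] fun _ => f' y := by
      filter_upwards [eventually_gt_nhds zero_lt_one] with l hl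
      exact hf'hom l hl
    exact h1.unique ((hasDerivAt_const (1 : ℝ) (f' y)).congr_of_eventuallyEq heq)
  -- symmetry of the second derivative
  have hsymm : ∀ v w, fderiv ℝ f' y v w = fderiv ℝ f' y w v := by
    have hev : ∀ᶠ z in nhds y, HasFDerivAt F (f' z) z := by
      filter_upwards [hnhds] with z hz using (hFd z hz).hasFDerivAt
    exact second_derivative_symmetric_of_eventually hev hf'd.hasFDerivAt
  set f'' : (Fin n → ℝ) →L[ℝ] ((Fin n → ℝ) →L[ℝ] ℝ) := fderiv ℝ f' y with hf''def
  -- derivative of pd F k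
  have hpd : ∀ k : Fin n, HasFDerivAt (pd F k)
      ((ContinuousLinearMap.apply ℝ ℝ (Pi.single k 1 : Fin n → ℝ)).comp f'') y := by
    intro k
    exact (ContinuousLinearMap.apply ℝ ℝ
      (Pi.single k 1 : Fin n → ℝ)).hasFDerivAt.comp y hf'd.hasFDerivAt
  -- derivative of the inverse of F
  have hinv : HasFDerivAt (fun z => (F z)⁻¹) (-((F y ^ 2)⁻¹ • f' y)) y := by
    have := (hasDerivAt_inv (hF y hy)).comp_hasFDerivAt y (hFd y hy).hasFDerivAt
    simpa [Function.comp_def, neg_smul] using this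
  -- derivative of t · k
  have hτ : ∀ k : Fin n, HasFDerivAt (fun z => t z k)
      (((F y)⁻¹ • ((ContinuousLinearMap.apply ℝ ℝ (Pi.single k 1 : Fin n → ℝ)).comp f''))
        + (pd F k y) • (-((F y ^ 2)⁻¹ • f' y))) y := by
    intro k
    have htfun : (fun z => t z k) = fun z => (F z)⁻¹ * pd F k z := by
      funext z; rw [ht]; ring
    rw [htfun]
    exact hinv.mul (hpd k)
  -- the key symmetric quantity
  have hτval : ∀ a b : Fin n,
      (((F y)⁻¹ • ((ContinuousLinearMap.apply ℝ ℝ (Pi.single a 1 : Fin n → ℝ)).comp f''))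
        + (pd F a y) • (-((F y ^ 2)⁻¹ • f' y))) (X b y)
      = (F y)⁻¹ * f'' (Pi.single b 1) (Pi.single a 1) := by
    intro a b
    have h1 : f' y (X b y) = 0 := by
      rw [hX, ht]
      have : pd F b y = f' y (Pi.single b 1) := rfl
      simp only [map_sub, map_smul, smul_eq_mul, euler1, this]
      field_simp [hF y hy]
      ring
    have h2 : f'' (X b y) = f'' (Pi.single b 1) := by
      rw [hX]
      simp [euler2]
    simp [ContinuousLinearMap.add_apply, ContinuousLinearMap.smul_apply,
      ContinuousLinearMap.coe_comp', Function.comp_apply, h1, h2,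
      ContinuousLinearMap.apply_apply, smul_eq_mul]
  -- derivative of X k
  have hXd : ∀ k : Fin n, HasFDerivAt (X k)
      (-(t y k • ContinuousLinearMap.id ℝ (Fin n → ℝ)
        + (((F y)⁻¹ • ((ContinuousLinearMap.apply ℝ ℝ (Pi.single k 1 : Fin n → ℝ)).comp f''))
            + (pd F k y) • (-((F y ^ 2)⁻¹ • f' y))).smulRight y)) y := by
    intro k
    have hXfun : X k = fun z => Pi.single k 1 - t z k • z := funext (hX k)
    rw [hXfun]
    have hs := (hτ k).smul (hasFDerivAt_id y)
    have := (hasFDerivAt_const (Pi.single k 1 : Fin n → ℝ) y).sub hs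
    simpa using this
  -- putting everything together
  have hfi := (hXd i).fderiv
  have hfj := (hXd j).fderiv
  rw [lie, hfi, hfj]
  simp only [ContinuousLinearMap.neg_apply, ContinuousLinearMap.add_apply,
    ContinuousLinearMap.smul_apply, ContinuousLinearMap.coe_id', id_eq,
    ContinuousLinearMap.smulRight_apply, hτval]
  have hswap : f'' (Pi.single j 1) (Pi.single i 1) = f'' (Pi.single i 1) (Pi.single j 1) :=
    hsymm _ _
  rw [hswap]
  abel
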